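/- Under the assumptions of the previous statement, if additionally each h_j is the value at θ̃ of a map θ ↦ E H(X^{(j)}, θ) whose unique zero is θ_j, and θ_j ≠ θ_{j+1} for some j (i.e., there is at least one change, q ≥ 1), then there exists j ∈ {1,...,q} with h_j ≠ h_{j+1}. In other words, at least one change is detectable by the MOSUM-score statistic with inspection parameter θ̃. -/
import Mathlib


open Finset

/-- If each segment has a best-approximating parameter `θ j` uniquely characterized as the zero
of `F j`, consecutive parameters differ somewhere, and the inspection parameter `θt` solves the
weighted zero equation, then at least one change is detectable, i.e. `F j θt ≠ F (j+1) θt` for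
some `j`. -/
theorem exists_detectable_change {p q : ℕ} {Θ : Type*} (hq : 1 ≤ q)
    (w : Fin (q + 1) → ℝ) (hw : ∀ j, 0 < w j) (hsum : ∑ j, w j = 1)
    (F : Fin (q + 1) → Θ → EuclideanSpace ℝ (Fin p))
    (θ : Fin (q + 1) → Θ)
    (huniq : ∀ j t, F j t = 0 ↔ t = θ j)
    (θt : Θ) (hθt : ∑ j, w j • F j θt = 0)
    (hchange : ∃ j : Fin q, θ j.castSucc ≠ θ j.succ) :
    ∃ j : Fin q, F j.castSucc θt ≠ F j.succ θt := by
  by_contra h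
  push_neg at h
  have hconst : ∀ j : Fin (q + 1), F j θt = F 0 θt := by
    intro j
    induction j using Fin.induction with
    | zero => rfl
    | succ i ih => rw [← h i, ih]
  have hzero : F 0 θt = 0 := by
    calc F 0 θt = ∑ j, w j • F j θt := by
          simp_rw [fun j => hconst j, ← Finset.sum_smul, hsum, one_smul]
      _ = 0 := hθt
  obtain ⟨j, hj⟩ := hchange
  apply hj
  have h1 : θt = θ j.castSucc := (huniq j.castSucc θt).mp (by rw [hconst]; exact hzero)
  have h2 : θt = θ j.succ := (huniq j.succ θt).mp (by rw [hconst]; exact hzero)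
  rw [← h1, ← h2]
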